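/- Fix n ≥ 3, l ∈ {1,…,n+1}, and i < j in {1,…,n}. Then w_{ij}^l := w^p_{ij} ∘ ψ_l is a well-defined invariant on good-condition elements of G_{n+1}^2: if β and β′ are good-condition words in the generators of G_{n+1}^2 representing the same element of G_{n+1}^2, then w_{ij}^l(β) = w_{ij}^l(β′) in F_n^2. -/

import Mathlib

namespace GnkBrunnian

/-! ## Index types for generators -/

/-- Validity of a pair index: `1 ≤ i < j ≤ n`. -/
abbrev P2ok (n : ℕ) (p : ℕ × ℕ) : Prop := 1 ≤ p.1 ∧ p.1 < p.2 ∧ p.2 ≤ n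

/-- Index type for the generators `a_{ij}` of `G_n^2` (and `b_{ij}` of `PB_n`). -/
abbrev PIdx (n : ℕ) := {p : ℕ × ℕ // P2ok n p}

/-- Validity of a triple index: `1 ≤ i < j < k ≤ n`. -/
abbrev T3ok (n : ℕ) (t : ℕ × ℕ × ℕ) : Prop :=
  1 ≤ t.1 ∧ t.1 < t.2.1 ∧ t.2.1 < t.2.2 ∧ t.2.2 ≤ n

/-- Index type for the generators `a_{ijk}` of `G_n^3`. -/
abbrev TIdx (n : ℕ) := {t : ℕ × ℕ × ℕ // T3ok n t}

def sort2 (a b : ℕ) : ℕ × ℕ := (min a b, max a b)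

def sort3 (a b c : ℕ) : ℕ × ℕ × ℕ :=
  (min a (min b c), a + b + c - min a (min b c) - max a (max b c), max a (max b c))

def pairSet {n : ℕ} (p : PIdx n) : Finset ℕ := {p.1.1, p.1.2}

def tripSet {n : ℕ} (t : TIdx n) : Finset ℕ := {t.1.1, t.1.2.1, t.1.2.2}

/-- Reindexing after deleting the strand `m` : indices above `m` are decreased by one. -/
def del (m x : ℕ) : ℕ := if m < x then x - 1 else x

/-! ## The group `G_n^2` -/

/-- The free-group letter `a_{\{a,b\}}` (trivial if the index is out of range). -/
def fgen2 (n a b : ℕ) : FreeGroup (PIdx n) :=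
  if h : P2ok n (sort2 a b) then FreeGroup.of ⟨sort2 a b, h⟩ else 1

/-- The defining relators of `G_n^2`. -/
def rels2 (n : ℕ) : Set (FreeGroup (PIdx n)) :=
  {r | ∃ a : PIdx n, r = .of a * .of a} ∪
  {r | ∃ i j k l : ℕ,
      1 ≤ i ∧ i ≤ n ∧ 1 ≤ j ∧ j ≤ n ∧ 1 ≤ k ∧ k ≤ n ∧ 1 ≤ l ∧ l ≤ n ∧
      i ≠ j ∧ i ≠ k ∧ i ≠ l ∧ j ≠ k ∧ j ≠ l ∧ k ≠ l ∧
      r = fgen2 n i j * fgen2 n k l * (fgen2 n i j)⁻¹ * (fgen2 n k l)⁻¹} ∪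
  {r | ∃ i j k : ℕ,
      1 ≤ i ∧ i ≤ n ∧ 1 ≤ j ∧ j ≤ n ∧ 1 ≤ k ∧ k ≤ n ∧ i ≠ j ∧ i ≠ k ∧ j ≠ k ∧
      r = fgen2 n i j * fgen2 n i k * fgen2 n j k *
          (fgen2 n j k * fgen2 n i k * fgen2 n i j)⁻¹}

/-- The group `G_n^2`. -/
abbrev G2 (n : ℕ) := PresentedGroup (rels2 n)

/-- The generator `a_{\{a,b\}}` of `G_n^2` (trivial if the index is out of range). -/
def ggen2 (n a b : ℕ) : G2 n :=
  if h : P2ok n (sort2 a b) then PresentedGroup.of ⟨sort2 a b, h⟩ else 1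

/-- The element of `G_n^2` represented by a word in the generators. -/
def toG2 {n : ℕ} (β : List (PIdx n)) : G2 n :=
  (β.map fun a => (PresentedGroup.of a : G2 n)).prod

/-! ## The group `G_n^3` -/

/-- The free-group letter `a_{\{a,b,c\}}` (trivial if the index is out of range). -/
def fgen3 (n a b c : ℕ) : FreeGroup (TIdx n) :=
  if h : T3ok n (sort3 a b c) then FreeGroup.of ⟨sort3 a b c, h⟩ else 1

/-- The defining relators of `G_n^3`. -/
def rels3 (n : ℕ) : Set (FreeGroup (TIdx n)) :=
  {r | ∃ a : TIdx n, r = .of a * .of a} ∪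
  {r | ∃ a b : TIdx n, (tripSet a ∩ tripSet b).card < 2 ∧
      r = .of a * .of b * (.of a)⁻¹ * (.of b)⁻¹} ∪
  {r | ∃ i j k l : ℕ,
      1 ≤ i ∧ i ≤ n ∧ 1 ≤ j ∧ j ≤ n ∧ 1 ≤ k ∧ k ≤ n ∧ 1 ≤ l ∧ l ≤ n ∧
      i ≠ j ∧ i ≠ k ∧ i ≠ l ∧ j ≠ k ∧ j ≠ l ∧ k ≠ l ∧
      r = fgen3 n i j k * fgen3 n i j l * fgen3 n i k l * fgen3 n j k l *
          (fgen3 n j k l * fgen3 n i k l * fgen3 n i j l * fgen3 n i j k)⁻¹}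

/-- The group `G_n^3`. -/
abbrev G3 (n : ℕ) := PresentedGroup (rels3 n)

/-- The generator `a_{\{a,b,c\}}` of `G_n^3` (trivial if the index is out of range). -/
def ggen3 (n a b c : ℕ) : G3 n :=
  if h : T3ok n (sort3 a b c) then PresentedGroup.of ⟨sort3 a b c, h⟩ else 1

/-- The element of `G_n^3` represented by a word in the generators. -/
def toG3 {n : ℕ} (β : List (TIdx n)) : G3 n :=
  (β.map fun a => (PresentedGroup.of a : G3 n)).prod

/-! ## The pure braid group `PB_n` (standard Artin/Birman presentation) -/

/-- The defining relators of the pure braid group on `n` strands, in the standard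
presentation on the generators `b_{ij} = A_{ij}`, `1 ≤ i < j ≤ n`. -/
def relsPB (n : ℕ) : Set (FreeGroup (PIdx n)) :=
  {x | ∃ r s i j : ℕ, P2ok n (r, s) ∧ P2ok n (i, j) ∧ (s < i ∨ (i < r ∧ s < j)) ∧
      x = (fgen2 n r s)⁻¹ * fgen2 n i j * fgen2 n r s * (fgen2 n i j)⁻¹} ∪
  {x | ∃ r s j : ℕ, 1 ≤ r ∧ r < s ∧ s < j ∧ j ≤ n ∧
      x = (fgen2 n r s)⁻¹ * fgen2 n s j * fgen2 n r s *
          (fgen2 n r j * fgen2 n s j * (fgen2 n r j)⁻¹)⁻¹} ∪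
  {x | ∃ r s j : ℕ, 1 ≤ r ∧ r < s ∧ s < j ∧ j ≤ n ∧
      x = (fgen2 n r s)⁻¹ * fgen2 n r j * fgen2 n r s *
          ((fgen2 n r j * fgen2 n s j) * fgen2 n r j * (fgen2 n r j * fgen2 n s j)⁻¹)⁻¹} ∪
  {x | ∃ r i s j : ℕ, 1 ≤ r ∧ r < i ∧ i < s ∧ s < j ∧ j ≤ n ∧
      x = (fgen2 n r s)⁻¹ * fgen2 n i j * fgen2 n r s *
          ((fgen2 n r j * fgen2 n s j * (fgen2 n r j)⁻¹ * (fgen2 n s j)⁻¹) * fgen2 n i j *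
           (fgen2 n r j * fgen2 n s j * (fgen2 n r j)⁻¹ * (fgen2 n s j)⁻¹)⁻¹)⁻¹}

/-- The pure braid group on `n` strands. -/
abbrev PB (n : ℕ) := PresentedGroup (relsPB n)

/-- The standard generator `b_{ij}` of `PB_n` (trivial if the index is out of range). -/
def pbgen (n a b : ℕ) : PB n :=
  if h : P2ok n (sort2 a b) then PresentedGroup.of ⟨sort2 a b, h⟩ else 1

/-! ## The elements `c^n_{i,j}` and the homomorphism `φ_n` -/

/-- `c^n_{i,j} = (∏_{k=j+1}^{n} a_{ijk}) * (∏_{k=1, k∉{i,j}}^{j-1} a_{ijk}) ∈ G_n^3`. -/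
def cElt (n i j : ℕ) : G3 n :=
  (((List.range' (j + 1) (n - j)).map fun k => ggen3 n i j k).prod) *
  (((List.range' 1 (j - 1)).map fun k => ggen3 n i j k).prod)

/-- The image of `b_{ij}` under `φ_n`:
`(c^n_{i,i+1})⁻¹ ⋯ (c^n_{i,j-1})⁻¹ (c^n_{i,j})² c^n_{i,j-1} ⋯ c^n_{i,i+1}`. -/
def phiElt (n i j : ℕ) : G3 n :=
  (((List.range' (i + 1) (j - 1 - i)).map fun m => (cElt n i m)⁻¹).prod) *
  (cElt n i j) ^ 2 *
  (((List.range' (i + 1) (j - 1 - i)).reverse.map fun m => cElt n i m).prod)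

/-- `q` is the strand-deletion homomorphism `q_m : G_n^3 → G_{n-1}^3`. -/
def IsShift3 (n m : ℕ) (q : G3 n →* G3 (n - 1)) : Prop :=
  ∀ i j k : ℕ, 1 ≤ i → i < j → j < k → k ≤ n →
    q (ggen3 n i j k) =
      if m = i ∨ m = j ∨ m = k then 1
      else ggen3 (n - 1) (del m i) (del m j) (del m k)

/-- `p` is the strand-deletion homomorphism `p_m : PB_n → PB_{n-1}`. -/
def IsShiftPB (n m : ℕ) (p : PB n →* PB (n - 1)) : Prop :=
  ∀ i j : ℕ, 1 ≤ i → i < j → j ≤ n →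
    p (pbgen n i j) =
      if m = i ∨ m = j then 1 else pbgen (n - 1) (del m i) (del m j)

/-- `φ` is the Manturov–Nikonov homomorphism `φ_n : PB_n → G_n^3`. -/
def IsPhi (n : ℕ) (φ : PB n →* G3 n) : Prop :=
  ∀ i j : ℕ, 1 ≤ i → i < j → j ≤ n → φ (pbgen n i j) = phiElt n i j

/-! ## Words and good condition -/

def good2 {n : ℕ} (β : List (PIdx n)) : Prop := ∀ a : PIdx n, Even (β.count a)

def good3 {n : ℕ} (β : List (TIdx n)) : Prop := ∀ a : TIdx n, Even (β.count a)

/-! ## Free products of copies of `ℤ/2` -/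

/-- The free product of copies of `ℤ/2ℤ` indexed by `ι`. -/
abbrev FP2 (ι : Type) := PresentedGroup {r : FreeGroup ι | ∃ a : ι, r = .of a * .of a}

/-- Indices `l ∈ {1,…,n} \ {i,j,k}`. -/
abbrev SIdx3 (n i j k : ℕ) := {l : ℕ // (1 ≤ l ∧ l ≤ n) ∧ l ≠ i ∧ l ≠ j ∧ l ≠ k}

/-- The group `F_n^3` (for the fixed triple `(i,j,k)`). -/
abbrev F3 (n i j k : ℕ) := FP2 (SIdx3 n i j k → ZMod 2 × ZMod 2)

/-- Indices `k ∈ {1,…,n} \ {i,j}`. -/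
abbrev SIdx2 (n i j : ℕ) := {l : ℕ // (1 ≤ l ∧ l ≤ n) ∧ l ≠ i ∧ l ≠ j}

/-- The group `F_n^2` (for the fixed pair `(i,j)`). -/
abbrev F2 (n i j : ℕ) := FP2 (SIdx2 n i j → ZMod 2)

/-! ## The MN-invariants `w_{(i,j)}` and `w_{(i,j,k)}` -/

/-- The number of occurrences of the generator `a_{\{a,b\}}` in a word over `G_n^2`. -/
def cnt2 {n : ℕ} (β : List (PIdx n)) (a b : ℕ) : ℕ :=
  (β.filter fun x => decide (pairSet x = ({a, b} : Finset ℕ))).length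

/-- The number of occurrences of the generator `a_{\{a,b,c\}}` in a word over `G_n^3`. -/
def cnt3 {n : ℕ} (β : List (TIdx n)) (a b c : ℕ) : ℕ :=
  (β.filter fun x => decide (tripSet x = ({a, b, c} : Finset ℕ))).length

/-- `i_c` for an occurrence of `a_{ij}` with prefix `pre`: `i_c(k) = N_{ik} + N_{jk} (mod 2)`. -/
def iC2 {n : ℕ} (i j : ℕ) (pre : List (PIdx n)) : SIdx2 n i j → ZMod 2 :=
  fun k => ((cnt2 pre i k.1 + cnt2 pre j k.1 : ℕ) : ZMod 2)

/-- The MN-invariant `w_{(i,j)}` of a word over `G_n^2`. -/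
def w2 {n : ℕ} (i j : ℕ) (β : List (PIdx n)) : F2 n i j :=
  (((β.zipIdx.map Prod.swap).filter fun x => decide (pairSet x.2 = ({i, j} : Finset ℕ))).map
    fun x => (PresentedGroup.of (iC2 i j (β.take x.1)) : F2 n i j)).prod

/-- `i_c` for an occurrence of `a_{ijk}` with prefix `pre`:
`i_c(l) = (N_{jkl} + N_{ijl}, N_{ikl} + N_{ijl}) (mod 2)`. -/
def iC3 {n : ℕ} (i j k : ℕ) (pre : List (TIdx n)) : SIdx3 n i j k → ZMod 2 × ZMod 2 :=
  fun l => (((cnt3 pre j k l.1 + cnt3 pre i j l.1 : ℕ) : ZMod 2),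
            ((cnt3 pre i k l.1 + cnt3 pre i j l.1 : ℕ) : ZMod 2))

/-- The MN-invariant `w_{(i,j,k)}` of a word over `G_n^3`. -/
def w3 {n : ℕ} (i j k : ℕ) (β : List (TIdx n)) : F3 n i j k :=
  (((β.zipIdx.map Prod.swap).filter fun x => decide (tripSet x.2 = ({i, j, k} : Finset ℕ))).map
    fun x => (PresentedGroup.of (iC3 i j k (β.take x.1)) : F3 n i j k)).prod

/-! ## Explicit words for `c^n_{i,j}` and `φ_n(b_{ij})` -/

def tripMkS (n a b c : ℕ) : Option (TIdx n) :=
  if h : T3ok n (sort3 a b c) then some ⟨sort3 a b c, h⟩ else none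

def pairMkS (n a b : ℕ) : Option (PIdx n) :=
  if h : P2ok n (sort2 a b) then some ⟨sort2 a b, h⟩ else none

/-- The defining word of `c^n_{i,j}`. -/
def cWord (n i j : ℕ) : List (TIdx n) :=
  ((List.range' (j + 1) (n - j)).filterMap fun k => tripMkS n i j k) ++
  ((List.range' 1 (j - 1)).filterMap fun k => tripMkS n i j k)

/-- The defining word of `φ_n(b_{ij})`, with the inverses of the `c`-words expanded using
`a⁻¹ = a` for generators (i.e. by reversing the words). -/
def phiWord (n i j : ℕ) : List (TIdx n) :=
  (((List.range' (i + 1) (j - 1 - i)).map fun m => (cWord n i m).reverse).flatten) ++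
  cWord n i j ++ cWord n i j ++
  (((List.range' (i + 1) (j - 1 - i)).reverse.map fun m => cWord n i m).flatten)

/-! ## The group `G_{n,p}^2` (parity) -/

/-- Index type for the generators `a_{ij}^ε` of `G_{n,p}^2`. -/
abbrev PPIdx (n : ℕ) := PIdx n × ZMod 2

def fgenP2 (n a b : ℕ) (e : ZMod 2) : FreeGroup (PPIdx n) :=
  if h : P2ok n (sort2 a b) then FreeGroup.of (⟨sort2 a b, h⟩, e) else 1

/-- The defining relators of `G_{n,p}^2`. -/
def relsP2 (n : ℕ) : Set (FreeGroup (PPIdx n)) :=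
  {r | ∃ a : PPIdx n, r = .of a * .of a} ∪
  {r | ∃ (i j k l : ℕ) (e e' : ZMod 2),
      1 ≤ i ∧ i ≤ n ∧ 1 ≤ j ∧ j ≤ n ∧ 1 ≤ k ∧ k ≤ n ∧ 1 ≤ l ∧ l ≤ n ∧
      i ≠ j ∧ i ≠ k ∧ i ≠ l ∧ j ≠ k ∧ j ≠ l ∧ k ≠ l ∧
      r = fgenP2 n i j e * fgenP2 n k l e' * (fgenP2 n i j e)⁻¹ * (fgenP2 n k l e')⁻¹} ∪
  {r | ∃ (i j k : ℕ) (e1 e2 e3 : ZMod 2),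
      1 ≤ i ∧ i < j ∧ j < k ∧ k ≤ n ∧ e1 + e2 + e3 = 0 ∧
      r = fgenP2 n i j e1 * fgenP2 n i k e2 * fgenP2 n j k e3 *
          (fgenP2 n j k e3 * fgenP2 n i k e2 * fgenP2 n i j e1)⁻¹}

/-- The group `G_{n,p}^2`. -/
abbrev GP2 (n : ℕ) := PresentedGroup (relsP2 n)

/-- The element of `G_{n,p}^2` represented by a word in the generators. -/
def toGP2 {n : ℕ} (β : List (PPIdx n)) : GP2 n :=
  (β.map fun a => (PresentedGroup.of a : GP2 n)).prod

/-! ## The parity invariant `w^p_{ij}` on `G_{n,p}^2` -/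

/-- The number of occurrences of `a_{\{a,b\}}^e` in a word over `G_{n,p}^2`. -/
def cntP2 {n : ℕ} (β : List (PPIdx n)) (a b : ℕ) (e : ZMod 2) : ℕ :=
  (β.filter fun x => decide (pairSet x.1 = ({a, b} : Finset ℕ) ∧ x.2 = e)).length

/-- `i^p_c` for an occurrence of `a_{ij}^e` with prefix `pre`. -/
def iCP2 {n : ℕ} (i j : ℕ) (e : ZMod 2) (pre : List (PPIdx n)) : SIdx2 n i j → ZMod 2 :=
  fun k =>
    if e = 0 then ((cntP2 pre i k.1 0 + cntP2 pre j k.1 0 : ℕ) : ZMod 2)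
    else ((cntP2 pre i k.1 0 + cntP2 pre j k.1 1 : ℕ) : ZMod 2)

/-- The invariant `w^p_{ij}` of a word over `G_{n,p}^2`. -/
def wP2 {n : ℕ} (i j : ℕ) (β : List (PPIdx n)) : F2 n i j :=
  (((β.zipIdx.map Prod.swap).filter fun x => decide (pairSet x.2.1 = ({i, j} : Finset ℕ))).map
    fun x => (PresentedGroup.of (iCP2 i j x.2.2 (β.take x.1)) : F2 n i j)).prod

/-! ## The map `ψ_l : G_{n+1}^2 → G_{n,p}^2` -/

/-- The word over `G_{n,p}^2` obtained from a word over `G_{n+1}^2` by deleting the strand `l`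
and recording parities. -/
def psiWord (n l : ℕ) (β : List (PIdx (n + 1))) : List (PPIdx n) :=
  (β.zipIdx.map Prod.swap).filterMap fun x =>
    if l = x.2.1.1 ∨ l = x.2.1.2 then none
    else (pairMkS n (del l x.2.1.1) (del l x.2.1.2)).map fun p =>
      (p, ((cnt2 (β.take x.1) x.2.1.1 l + cnt2 (β.take x.1) x.2.1.2 l : ℕ) : ZMod 2))

/-! ## The group `G_{n,p}^3` (parity) -/

/-- Index type for the generators `a_{ijk}^ε` of `G_{n,p}^3`. -/
abbrev TPIdx (n : ℕ) := TIdx n × ZMod 2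

def fgenP3 (n a b c : ℕ) (e : ZMod 2) : FreeGroup (TPIdx n) :=
  if h : T3ok n (sort3 a b c) then FreeGroup.of (⟨sort3 a b c, h⟩, e) else 1

/-- The defining relators of `G_{n,p}^3`. -/
def relsP3 (n : ℕ) : Set (FreeGroup (TPIdx n)) :=
  {r | ∃ a : TPIdx n, r = .of a * .of a} ∪
  {r | ∃ a b : TPIdx n, (tripSet a.1 ∩ tripSet b.1).card < 2 ∧
      r = (.of a * .of b) ^ 2} ∪
  {r | ∃ (i j k l : ℕ) (ei ej ek el : ZMod 2),
      1 ≤ i ∧ i ≤ n ∧ 1 ≤ j ∧ j ≤ n ∧ 1 ≤ k ∧ k ≤ n ∧ 1 ≤ l ∧ l ≤ n ∧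
      i ≠ j ∧ i ≠ k ∧ i ≠ l ∧ j ≠ k ∧ j ≠ l ∧ k ≠ l ∧
      (if max (max i j) (max k l) = i then ej + ek + el
       else if max (max i j) (max k l) = j then ei + ek + el
       else if max (max i j) (max k l) = k then ei + ej + el
       else ei + ej + ek) = 0 ∧
      r = (fgenP3 n i j k el * fgenP3 n i j l ek * fgenP3 n i k l ej * fgenP3 n j k l ei) ^ 2}

/-- The group `G_{n,p}^3`. -/
abbrev GP3 (n : ℕ) := PresentedGroup (relsP3 n)

/-- The element of `G_{n,p}^3` represented by a word in the generators. -/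
def toGP3 {n : ℕ} (β : List (TPIdx n)) : GP3 n :=
  (β.map fun a => (PresentedGroup.of a : GP3 n)).prod

/-! ## The map `f : G_{n+1}^3 → G_{n,p}^3` -/

/-- The word over `G_{n,p}^3` obtained from a word over `G_{n+1}^3` by deleting the letters
containing the index `n+1` and recording parities. -/
def fWord (n : ℕ) (β : List (TIdx (n + 1))) : List (TPIdx n) :=
  (β.zipIdx.map Prod.swap).filterMap fun x =>
    if x.2.1.2.2 = n + 1 then none
    else (tripMkS n x.2.1.1 x.2.1.2.1 x.2.1.2.2).map fun t =>
      (t, ((cnt3 (β.take x.1) x.2.1.2.1 x.2.1.2.2 (n + 1) +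
            cnt3 (β.take x.1) x.2.1.1 x.2.1.2.2 (n + 1) : ℕ) : ZMod 2))

/-! ## The parity invariant `w^p_{ijk}` on `G_{n,p}^3` -/

/-- The group `F_n^3` with values in `ℤ/2` (for the parity invariant). -/
abbrev F3p (n i j k : ℕ) := FP2 (SIdx3 n i j k → ZMod 2)

/-- The number of occurrences of `a_{\{a,b,c\}}^e` in a word over `G_{n,p}^3`. -/
def cntP3 {n : ℕ} (β : List (TPIdx n)) (a b c : ℕ) (e : ZMod 2) : ℕ :=
  (β.filter fun x => decide (tripSet x.1 = ({a, b, c} : Finset ℕ) ∧ x.2 = e)).length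

/-- `i^p_c` for an occurrence of `a_{ijk}^e` with prefix `pre` (here `k > i, j`). -/
def iCP3 {n : ℕ} (i j k : ℕ) (e : ZMod 2) (pre : List (TPIdx n)) : SIdx3 n i j k → ZMod 2 :=
  fun l =>
    if e = 0 then
      (if k < l.1 then
        ((cntP3 pre i k l.1 0 + cntP3 pre j k l.1 0 + cntP3 pre i j l.1 1 : ℕ) : ZMod 2)
      else ((cntP3 pre i k l.1 0 + cntP3 pre j k l.1 0 : ℕ) : ZMod 2))
    else
      (if k < l.1 then
        ((cntP3 pre i k l.1 0 + cntP3 pre j k l.1 1 + cntP3 pre i j l.1 0 : ℕ) : ZMod 2)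
      else ((cntP3 pre i k l.1 0 + cntP3 pre j k l.1 1 : ℕ) : ZMod 2))

/-- The invariant `w^p_{ijk}` of a word over `G_{n,p}^3`. -/
def wP3 {n : ℕ} (i j k : ℕ) (β : List (TPIdx n)) : F3p n i j k :=
  (((β.zipIdx.map Prod.swap).filter fun x => decide (tripSet x.2.1 = ({i, j, k} : Finset ℕ))).map
    fun x => (PresentedGroup.of (iCP3 i j k x.2.2 (β.take x.1)) : F3p n i j k)).prod

/-!
Both `ψ_l` and `w^p_{ij}` are computed by reading the word from left to right and keeping
parities: `ψ_l` keeps the parities `c x` of the numbers of letters `a_{xl}` read so far (they are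
the exponents `ε`), and `w^p_{ij}` keeps the parities of the counts `N^δ_{st}`. A reader with
abelian state space `A` and output group `H` lets each letter act on `A × H` by
`(s, h) ↦ (s + v, h * g s)`; since the first letter acts first, reading a word evaluates a
homomorphism into the opposite of the permutation group, as soon as these permutations satisfy
the defining relations. For `ψ_l`, with outputs in any group whose letters `a_{xy}^ε` satisfy
the relations of `G_{n,p}^2`, this holds because a letter through the strand `l` only flips two
parities, and a triangle relation on `x, y, z ≠ l` goes to a triangle relation with exponents
`c x + c y`, `c x + c z`, `c y + c z`, which sum to `0`. For the letters of `w^p_{ij}` it is a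
parity count on the few `N^δ_{st}` that a relation changes.
-/

open Equiv MulOpposite

lemma finset_pair_eq_pair_iff {α : Type*} [DecidableEq α] {x y z w : α} :
    ({x, y} : Finset α) = {z, w} ↔ x = z ∧ y = w ∨ x = w ∧ y = z := by
  rw [← Finset.coe_inj, Finset.coe_pair, Finset.coe_pair, Set.pair_eq_pair_iff]

lemma FP2.of_mul_self {ι : Type} (a : ι) :
    (PresentedGroup.of a : FP2 ι) * PresentedGroup.of a = 1 :=
  PresentedGroup.one_of_mem ⟨a, rfl⟩

lemma del_inj {l x y : ℕ} (hx : x ≠ l) (hy : y ≠ l) : del l x = del l y ↔ x = y := by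
  unfold del; split_ifs <;> omega

lemma sort2_del {l x y : ℕ} (hxy : x < y) : sort2 (del l x) (del l y) = (del l x, del l y) := by
  unfold sort2 del
  split_ifs <;> simp only [Prod.mk.injEq] <;> omega

lemma P2ok_del {n l x y : ℕ} (hl1 : 1 ≤ l) (hl2 : l ≤ n + 1) (h : P2ok (n + 1) (x, y))
    (hx : x ≠ l) (hy : y ≠ l) : P2ok n (del l x, del l y) := by
  obtain ⟨h1, h2, h3⟩ := h
  unfold del P2ok
  split_ifs <;> omega

section Words

lemma filterMap_singleton {α β : Type*} (f : α → Option β) (a : α) :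
    [a].filterMap f = (f a).toList := by
  cases h : f a <;> simp [h]

lemma zipIdx_swap_append_singleton {α : Type*} (γ : List α) (b : α) :
    (γ ++ [b]).zipIdx.map Prod.swap = γ.zipIdx.map Prod.swap ++ [(γ.length, b)] := by
  simp [List.zipIdx_append]

lemma take_append_singleton_of_mem_zipIdx {α : Type*} {γ : List α} {b : α} {x : ℕ × α}
    (hx : x ∈ γ.zipIdx.map Prod.swap) : (γ ++ [b]).take x.1 = γ.take x.1 := by
  obtain ⟨⟨c, k⟩, hy, rfl⟩ := List.mem_map.mp hx
  exact List.take_append_of_le_length (List.mem_zipIdx' hy).1.le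

lemma wP2_append_singleton {n : ℕ} (i j : ℕ) (γ : List (PPIdx n)) (b : PPIdx n) :
    wP2 i j (γ ++ [b]) = wP2 i j γ *
      if pairSet b.1 = ({i, j} : Finset ℕ) then PresentedGroup.of (iCP2 i j b.2 γ) else 1 := by
  unfold wP2
  rw [zipIdx_swap_append_singleton, List.filter_append, List.map_append, List.prod_append]
  congr 1
  · refine congrArg List.prod (List.map_congr_left fun x hx => ?_)
    rw [take_append_singleton_of_mem_zipIdx (List.mem_of_mem_filter hx)]
  · split_ifs with hb <;> simp [hb]

lemma psiWord_append_singleton (n l : ℕ) (β : List (PIdx (n + 1))) (a : PIdx (n + 1)) :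
    psiWord n l (β ++ [a]) = psiWord n l β ++
      (if l = a.1.1 ∨ l = a.1.2 then none
       else (pairMkS n (del l a.1.1) (del l a.1.2)).map fun p =>
         (p, ((cnt2 β a.1.1 l + cnt2 β a.1.2 l : ℕ) : ZMod 2))).toList := by
  unfold psiWord
  rw [zipIdx_swap_append_singleton, List.filterMap_append, filterMap_singleton, List.take_left]
  congr 1
  exact List.filterMap_congr fun x hx => by rw [take_append_singleton_of_mem_zipIdx hx]

lemma cnt2_append_singleton {m : ℕ} (β : List (PIdx m)) (a : PIdx m) (x y : ℕ) :
    cnt2 (β ++ [a]) x y = cnt2 β x y + if pairSet a = {x, y} then 1 else 0 := by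
  unfold cnt2
  split_ifs with h <;> simp [h]

end Words

section Machine

variable {A H : Type*} [AddGroup A] [Group H]

def machineStep (v : A) (g : A → H) : Perm (A × H) :=
  (Equiv.addRight v).prodShear fun a => Equiv.mulRight (g a)

@[simp] lemma machineStep_apply (v : A) (g : A → H) (p : A × H) :
    machineStep v g p = (p.1 + v, p.2 * g p.1) := rfl

end Machine

/-- The relations of `G_{n,p}^2` on a family `L x y e = a_{xy}^e`, for indices in any order. -/
structure ParityRelations {H : Type*} [Group H] (L : ℕ → ℕ → ZMod 2 → H) : Prop where
  symm : ∀ x y e, L x y e = L y x e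
  sq : ∀ x y e, L x y e * L x y e = 1
  comm : ∀ x y u w e e', x ≠ u → x ≠ w → y ≠ u → y ≠ w →
    L x y e * L u w e' = L u w e' * L x y e
  tri : ∀ x y z e₁ e₂ e₃, x ≠ y → x ≠ z → y ≠ z → e₁ + e₂ + e₃ = 0 →
    L x y e₁ * L x z e₂ * L y z e₃ = L y z e₃ * L x z e₂ * L x y e₁

section ParityInvariant

variable (n i j : ℕ)

/-- The value at `({s, t}, δ)` is the parity of `N^δ_{st}`. -/
abbrev ParityCounts := Finset ℕ × ZMod 2 → ZMod 2

def parityRead (e : ZMod 2) (N : ParityCounts) (k : SIdx2 n i j) : ZMod 2 :=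
  N ({i, k.1}, 0) + N ({j, k.1}, e)

def parityOut (x y : ℕ) (e : ZMod 2) (N : ParityCounts) : F2 n i j :=
  if ({x, y} : Finset ℕ) = {i, j} then PresentedGroup.of (parityRead n i j e N) else 1

def parityLetter (x y : ℕ) (e : ZMod 2) : (Perm (ParityCounts × F2 n i j))ᵐᵒᵖ :=
  op (machineStep (Pi.single ({x, y}, e) 1) (parityOut n i j x y e))

lemma parityRead_add (e : ZMod 2) (N M : ParityCounts) :
    parityRead n i j e (N + M) = parityRead n i j e N + parityRead n i j e M := by
  funext k
  simp only [parityRead, Pi.add_apply]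
  abel

lemma parityOut_of_ne {x y : ℕ} (h : ({x, y} : Finset ℕ) ≠ {i, j}) (e : ZMod 2)
    (N : ParityCounts) : parityOut n i j x y e N = 1 := if_neg h

lemma parityOut_add {x y : ℕ} {e : ZMod 2} {M : ParityCounts}
    (hM : ({x, y} : Finset ℕ) = {i, j} → parityRead n i j e M = 0) (N : ParityCounts) :
    parityOut n i j x y e (N + M) = parityOut n i j x y e N := by
  unfold parityOut
  split_ifs with h
  · rw [parityRead_add, hM h, add_zero]
  · rfl

lemma parityOut_comm_args (x y : ℕ) (e : ZMod 2) :
    parityOut n i j x y e = parityOut n i j y x e := by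
  unfold parityOut
  rw [Finset.pair_comm x y]

lemma parityRead_single_self {x y : ℕ} (e : ZMod 2) (h : ({x, y} : Finset ℕ) = {i, j}) :
    parityRead n i j e (Pi.single ({x, y}, e) 1) = 0 := by
  funext ⟨k, _, hki, hkj⟩
  simp only [parityRead, h, Pi.single_apply, Prod.mk.injEq, finset_pair_eq_pair_iff]
  split_ifs <;> simp_all

lemma parityOut_add_single_of_disjoint {x y u w : ℕ} (hxu : x ≠ u) (hxw : x ≠ w) (hyu : y ≠ u)
    (hyw : y ≠ w) (e e' : ZMod 2) (N : ParityCounts) :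
    parityOut n i j x y e (N + Pi.single ({u, w}, e') 1) = parityOut n i j x y e N := by
  refine parityOut_add n i j (fun h => funext fun k => ?_) N
  rw [finset_pair_eq_pair_iff] at h
  have hi : ({i, k.1} : Finset ℕ) ≠ {u, w} := by rw [Ne, finset_pair_eq_pair_iff]; omega
  have hj : ({j, k.1} : Finset ℕ) ≠ {u, w} := by rw [Ne, finset_pair_eq_pair_iff]; omega
  simp [parityRead, hi, hj]

/-- At `k = z` the two crossing letters change `N^0_{iz} + N^e_{jz}` by `[f = 0] + [g = e]`
or by `[f = e] + [g = 0]`; both vanish because `f = e + g`. -/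
lemma parityRead_triangle {x y z : ℕ} {e f g : ZMod 2} (hxy : x ≠ y) (hxz : x ≠ z) (hyz : y ≠ z)
    (h : ({x, y} : Finset ℕ) = {i, j}) (he : e + f + g = 0) :
    parityRead n i j e (Pi.single ({x, z}, f) 1 + Pi.single ({y, z}, g) 1) = 0 := by
  funext ⟨k, _, hki, hkj⟩
  obtain rfl : f = e + g := by
    linear_combination he - (e + g) * (CharTwo.two_eq_zero : (2 : ZMod 2) = 0)
  rcases finset_pair_eq_pair_iff.mp h with ⟨rfl, rfl⟩ | ⟨rfl, rfl⟩ <;>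
  simp only [parityRead, Pi.add_apply, Pi.single_apply, Prod.mk.injEq, finset_pair_eq_pair_iff,
    Pi.zero_apply] <;>
  by_cases hkz : k = z <;>
  simp [hkz, hxy, hxz, hyz, hki, hkj, hxy.symm, hxz.symm, hyz.symm] <;> revert e g <;> decide

lemma parityLetter_comm_args (x y : ℕ) (e : ZMod 2) :
    parityLetter n i j x y e = parityLetter n i j y x e := by
  rw [parityLetter, parityLetter, parityOut_comm_args, Finset.pair_comm]

lemma parityLetter_sq (x y : ℕ) (e : ZMod 2) :
    parityLetter n i j x y e * parityLetter n i j x y e = 1 := by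
  apply unop_injective
  ext ⟨N, h⟩ : 1
  simp only [parityLetter, unop_mul, unop_op, Perm.mul_apply, machineStep_apply, unop_one,
    Perm.one_apply, add_assoc, CharTwo.add_self_eq_zero, add_zero,
    parityOut_add n i j (parityRead_single_self n i j e), mul_assoc, Prod.mk.injEq, true_and]
  unfold parityOut
  split_ifs
  · rw [FP2.of_mul_self, mul_one]
  · rw [mul_one, mul_one]

lemma parityLetter_comm {x y u w : ℕ} (hxu : x ≠ u) (hxw : x ≠ w) (hyu : y ≠ u) (hyw : y ≠ w)
    (e e' : ZMod 2) :
    parityLetter n i j x y e * parityLetter n i j u w e' =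
      parityLetter n i j u w e' * parityLetter n i j x y e := by
  apply unop_injective
  ext ⟨N, h⟩ : 1
  simp only [parityLetter, unop_mul, unop_op, Perm.mul_apply, machineStep_apply, Prod.mk.injEq,
    parityOut_add_single_of_disjoint n i j hxu hxw hyu hyw,
    parityOut_add_single_of_disjoint n i j hxu.symm hyu.symm hxw.symm hyw.symm, mul_assoc]
  refine ⟨add_right_comm _ _ _, ?_⟩
  by_cases hA : ({x, y} : Finset ℕ) = {i, j}
  · have hB : ({u, w} : Finset ℕ) ≠ {i, j} := by
      rw [← hA, Ne, finset_pair_eq_pair_iff]; omega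
    rw [parityOut_of_ne n i j hB, one_mul, mul_one]
  · rw [parityOut_of_ne n i j hA, one_mul, mul_one]

lemma parityLetter_tri {x y z : ℕ} (hxy : x ≠ y) (hxz : x ≠ z) (hyz : y ≠ z)
    {e₁ e₂ e₃ : ZMod 2} (he : e₁ + e₂ + e₃ = 0) :
    parityLetter n i j x y e₁ * parityLetter n i j x z e₂ * parityLetter n i j y z e₃ =
      parityLetter n i j y z e₃ * parityLetter n i j x z e₂ * parityLetter n i j x y e₁ := by
  apply unop_injective
  ext ⟨N, h⟩ : 1
  simp only [parityLetter, unop_mul, unop_op, Perm.mul_apply, machineStep_apply, Prod.mk.injEq]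
  refine ⟨by abel, ?_⟩
  set vA : ParityCounts := Pi.single ({x, y}, e₁) 1
  set vB : ParityCounts := Pi.single ({x, z}, e₂) 1
  set vC : ParityCounts := Pi.single ({y, z}, e₃) 1
  by_cases hA : ({x, y} : Finset ℕ) = {i, j}
  · have hB : ({x, z} : Finset ℕ) ≠ {i, j} := by rw [← hA, Ne, finset_pair_eq_pair_iff]; omega
    have hC : ({y, z} : Finset ℕ) ≠ {i, j} := by rw [← hA, Ne, finset_pair_eq_pair_iff]; omega
    have hBC : parityRead n i j e₁ (vB + vC) = 0 := parityRead_triangle n i j hxy hxz hyz hA he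
    simp only [parityOut_of_ne n i j hB, parityOut_of_ne n i j hC, mul_one, add_assoc,
      add_comm vC vB, parityOut_add n i j fun _ => hBC]
  by_cases hB : ({x, z} : Finset ℕ) = {i, j}
  · have hC : ({y, z} : Finset ℕ) ≠ {i, j} := by rw [← hB, Ne, finset_pair_eq_pair_iff]; omega
    have hAC : parityRead n i j e₂ (vA + vC) = 0 := by
      rw [← parityRead_triangle n i j hxz hxy hyz.symm hB (e := e₂) (f := e₁) (g := e₃)
        (by rw [← he]; ring), Finset.pair_comm z y]
    have hN : N + vC = N + vA + (vA + vC) := by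
      rw [← add_assoc, add_assoc N, CharTwo.add_self_eq_zero, add_zero]
    simp only [parityOut_of_ne n i j hA, parityOut_of_ne n i j hC, mul_one, hN,
      parityOut_add n i j fun _ => hAC]
  by_cases hC : ({y, z} : Finset ℕ) = {i, j}
  · have hAB : parityRead n i j e₃ (vA + vB) = 0 := by
      rw [← parityRead_triangle n i j hyz hxy.symm hxz.symm hC (e := e₃) (f := e₁) (g := e₂)
        (by rw [← he]; ring), Finset.pair_comm y x, Finset.pair_comm z x]
    simp only [parityOut_of_ne n i j hA, parityOut_of_ne n i j hB, mul_one, add_assoc,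
      parityOut_add n i j fun _ => hAB]
  simp only [parityOut_of_ne n i j hA, parityOut_of_ne n i j hB, parityOut_of_ne n i j hC]

lemma parityLetter_parityRelations : ParityRelations (parityLetter n i j) where
  symm := parityLetter_comm_args n i j
  sq := parityLetter_sq n i j
  comm _ _ _ _ e e' hxu hxw hyu hyw := parityLetter_comm n i j hxu hxw hyu hyw e e'
  tri _ _ _ _ _ _ hxy hxz hyz he := parityLetter_tri n i j hxy hxz hyz he

variable {n}

def parityCounts (γ : List (PPIdx n)) : ParityCounts := fun qe =>
  ((γ.filter fun a => decide (pairSet a.1 = qe.1 ∧ a.2 = qe.2)).length : ZMod 2)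

lemma parityCounts_append_singleton (γ : List (PPIdx n)) (b : PPIdx n) :
    parityCounts (γ ++ [b]) = parityCounts γ + Pi.single (pairSet b.1, b.2) 1 := by
  funext ⟨q, e⟩
  by_cases hb : (q, e) = (pairSet b.1, b.2)
  · obtain ⟨rfl, rfl⟩ := Prod.mk.inj hb
    simp [parityCounts]
  · rw [Prod.mk.injEq, not_and_or] at hb
    simp only [parityCounts, List.filter_append, List.length_append, Pi.add_apply,
      Pi.single_apply, Prod.mk.injEq]
    rcases hb with hb | hb <;> simp [Ne.symm hb, hb]

lemma iCP2_eq_parityRead (e : ZMod 2) (γ : List (PPIdx n)) :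
    iCP2 i j e γ = parityRead n i j e (parityCounts γ) := by
  funext k
  rcases (by decide : ∀ e : ZMod 2, e = 0 ∨ e = 1) e with rfl | rfl <;>
    simp [iCP2, parityRead, parityCounts, cntP2]

lemma parityLetter_run (γ : List (PPIdx n)) :
    (γ.map fun a => parityLetter n i j a.1.1.1 a.1.1.2 a.2).prod.unop (0, 1) =
      (parityCounts γ, wP2 i j γ) := by
  induction γ using List.reverseRecOn with
  | nil => exact Prod.ext (funext fun _ => by simp [parityCounts]) (by simp [wP2])
  | append_singleton γ b ih =>
    rw [List.map_append, List.prod_append, unop_mul, Perm.mul_apply, ih, List.map_singleton,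
      List.prod_singleton, parityLetter, unop_op, machineStep_apply,
      parityCounts_append_singleton, wP2_append_singleton, iCP2_eq_parityRead]
    rfl

end ParityInvariant

section StrandDeletion

variable {H : Type*} [Group H] (n l : ℕ) (L : ℕ → ℕ → ZMod 2 → H)

def strandFlip (x y : ℕ) : ℕ → ZMod 2 :=
  if x = l then Pi.single y 1 else if y = l then Pi.single x 1 else 0

def psiOut (x y : ℕ) (c : ℕ → ZMod 2) : H :=
  if x = l ∨ y = l then 1 else L (del l x) (del l y) (c x + c y)

def psiLetter (x y : ℕ) : (Perm ((ℕ → ZMod 2) × H))ᵐᵒᵖ :=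
  op (machineStep (strandFlip l x y) (psiOut l L x y))

lemma strandFlip_comm_args (x y : ℕ) : strandFlip l x y = strandFlip l y x := by
  unfold strandFlip
  split_ifs <;> subst_vars <;> rfl

lemma strandFlip_of_ne {x y : ℕ} (hx : x ≠ l) (hy : y ≠ l) : strandFlip l x y = 0 := by
  simp [strandFlip, hx, hy]

lemma strandFlip_self_left (y : ℕ) : strandFlip l l y = Pi.single y 1 := if_pos rfl

lemma strandFlip_self_right {x : ℕ} (hx : x ≠ l) : strandFlip l x l = Pi.single x 1 := by
  rw [strandFlip, if_neg hx, if_pos rfl]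

lemma strandFlip_apply (x y z : ℕ) :
    strandFlip l x y z = if ({x, y} : Finset ℕ) = {z, l} then 1 else 0 := by
  unfold strandFlip
  split_ifs <;> simp_all [Pi.single_apply, finset_pair_eq_pair_iff]
  omega

lemma strandFlip_apply_of_ne {x y z : ℕ} (hx : z ≠ x) (hy : z ≠ y) : strandFlip l x y z = 0 := by
  unfold strandFlip
  split_ifs <;> simp [hx, hy]

lemma psiOut_of_eq {x y : ℕ} (h : x = l ∨ y = l) (c : ℕ → ZMod 2) : psiOut l L x y c = 1 :=
  if_pos h

lemma psiOut_add {x y : ℕ} {v : ℕ → ZMod 2} (hv : v x + v y = 0) (c : ℕ → ZMod 2) :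
    psiOut l L x y (c + v) = psiOut l L x y c := by
  unfold psiOut
  split_ifs
  · rfl
  · congr 1
    simp only [Pi.add_apply]
    linear_combination hv

lemma psiOut_add_single_add_single {x y : ℕ} (hxy : x ≠ y) (c : ℕ → ZMod 2) :
    psiOut l L x y (c + (Pi.single x 1 + Pi.single y 1)) = psiOut l L x y c :=
  psiOut_add l L (by simp [hxy, hxy.symm]; decide) c

lemma psiOut_add_strandFlip {x y u w : ℕ} (hxu : x ≠ u) (hxw : x ≠ w) (hyu : y ≠ u)
    (hyw : y ≠ w) (c : ℕ → ZMod 2) :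
    psiOut l L x y (c + strandFlip l u w) = psiOut l L x y c :=
  psiOut_add l L (by rw [strandFlip_apply_of_ne l hxu hxw, strandFlip_apply_of_ne l hyu hyw,
    add_zero]) c

variable {L} (hL : ParityRelations L)
include hL

lemma psiLetter_comm_args (x y : ℕ) : psiLetter l L x y = psiLetter l L y x := by
  have : psiOut l L x y = psiOut l L y x := by
    funext c
    simp only [psiOut, or_comm (a := x = l), add_comm (c x), hL.symm (del l x)]
  rw [psiLetter, psiLetter, strandFlip_comm_args, this]

lemma psiLetter_sq (x y : ℕ) : psiLetter l L x y * psiLetter l L x y = 1 := by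
  apply unop_injective
  ext ⟨c, h⟩ : 1
  simp only [psiLetter, unop_mul, unop_op, Perm.mul_apply, machineStep_apply, unop_one,
    Perm.one_apply, add_assoc, CharTwo.add_self_eq_zero, add_zero, mul_assoc, Prod.mk.injEq,
    true_and]
  by_cases hl : x = l ∨ y = l
  · simp [psiOut_of_eq l L hl]
  · obtain ⟨hx, hy⟩ := not_or.mp hl
    rw [strandFlip_of_ne l hx hy, add_zero, psiOut, if_neg hl, hL.sq, mul_one]

lemma psiLetter_comm {x y u w : ℕ} (hxu : x ≠ u) (hxw : x ≠ w) (hyu : y ≠ u) (hyw : y ≠ w) :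
    psiLetter l L x y * psiLetter l L u w = psiLetter l L u w * psiLetter l L x y := by
  apply unop_injective
  ext ⟨c, h⟩ : 1
  simp only [psiLetter, unop_mul, unop_op, Perm.mul_apply, machineStep_apply, Prod.mk.injEq,
    psiOut_add_strandFlip l L hxu hxw hyu hyw,
    psiOut_add_strandFlip l L hxu.symm hyu.symm hxw.symm hyw.symm, mul_assoc]
  refine ⟨add_right_comm _ _ _, ?_⟩
  by_cases hA : x = l ∨ y = l
  · rw [psiOut_of_eq l L hA, one_mul, mul_one]
  by_cases hB : u = l ∨ w = l
  · rw [psiOut_of_eq l L hB, one_mul, mul_one]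
  simp only [psiOut, if_neg hA, if_neg hB]
  obtain ⟨hx, hy⟩ := not_or.mp hA
  obtain ⟨hu, hw⟩ := not_or.mp hB
  rw [hL.comm _ _ _ _ _ _ ((del_inj hx hu).not.mpr hxu) ((del_inj hx hw).not.mpr hxw)
    ((del_inj hy hu).not.mpr hyu) ((del_inj hy hw).not.mpr hyw)]

lemma psiLetter_tri {x y z : ℕ} (hxy : x ≠ y) (hxz : x ≠ z) (hyz : y ≠ z) :
    psiLetter l L x y * psiLetter l L x z * psiLetter l L y z =
      psiLetter l L y z * psiLetter l L x z * psiLetter l L x y := by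
  apply unop_injective
  ext ⟨c, h⟩ : 1
  simp only [psiLetter, unop_mul, unop_op, Perm.mul_apply, machineStep_apply, Prod.mk.injEq]
  refine ⟨by abel, ?_⟩
  by_cases hx : x = l
  · subst hx
    have hxy' (c) : psiOut x L x y c = 1 := psiOut_of_eq x L (Or.inl rfl) c
    have hxz' (c) : psiOut x L x z c = 1 := psiOut_of_eq x L (Or.inl rfl) c
    simp only [hxy', hxz', mul_one, add_assoc, strandFlip_self_left,
      psiOut_add_single_add_single x L hyz]
  by_cases hy : y = l
  · subst hy
    have hxy' (c) : psiOut y L x y c = 1 := psiOut_of_eq y L (Or.inr rfl) c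
    have hyz' (c) : psiOut y L y z c = 1 := psiOut_of_eq y L (Or.inl rfl) c
    have hv : c + Pi.single z 1 = c + Pi.single x 1 + (Pi.single x 1 + Pi.single z 1) := by
      rw [← add_assoc, add_assoc c, CharTwo.add_self_eq_zero, add_zero]
    simp only [hxy', hyz', mul_one, strandFlip_self_left, strandFlip_self_right y hx]
    rw [hv, psiOut_add_single_add_single y L hxz]
  by_cases hz : z = l
  · subst hz
    have hxz' (c) : psiOut z L x z c = 1 := psiOut_of_eq z L (Or.inr rfl) c
    have hyz' (c) : psiOut z L y z c = 1 := psiOut_of_eq z L (Or.inr rfl) c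
    simp only [hxz', hyz', mul_one, add_assoc, strandFlip_self_right z hx,
      strandFlip_self_right z hy, add_comm (Pi.single y 1), psiOut_add_single_add_single z L hxy]
  have htri := hL.tri _ _ _ (c x + c y) (c x + c z) (c y + c z) ((del_inj hx hy).not.mpr hxy)
    ((del_inj hx hz).not.mpr hxz) ((del_inj hy hz).not.mpr hyz)
    (by linear_combination (c x + c y + c z) * (CharTwo.two_eq_zero : (2 : ZMod 2) = 0))
  simp only [mul_assoc] at htri
  simp only [strandFlip_of_ne l hx hy, strandFlip_of_ne l hx hz, strandFlip_of_ne l hy hz,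
    add_zero, psiOut, hx, hy, hz, or_self, if_false, mul_assoc, htri]

lemma lift_psiLetter_fgen2 {u v : ℕ} (hu : 1 ≤ u) (hv : 1 ≤ v) (hun : u ≤ n + 1) (hvn : v ≤ n + 1)
    (huv : u ≠ v) :
    FreeGroup.lift (fun a : PIdx (n + 1) => psiLetter l L a.1.1 a.1.2) (fgen2 (n + 1) u v) =
      psiLetter l L u v := by
  have hok : P2ok (n + 1) (sort2 u v) := by unfold sort2 P2ok; omega
  rw [fgen2, dif_pos hok, FreeGroup.lift_apply_of]
  rcases le_total u v with h | h
  · simp only [sort2, min_eq_left h, max_eq_right h]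
  · simp only [sort2, min_eq_right h, max_eq_left h, psiLetter_comm_args l hL v u]

lemma lift_psiLetter_eq_one_of_mem_rels2 : ∀ r ∈ rels2 (n + 1),
    FreeGroup.lift (fun a : PIdx (n + 1) => psiLetter l L a.1.1 a.1.2) r = 1 := by
  rintro r ((⟨a, rfl⟩ | ⟨x, y, u, w, hx, hxn, hy, hyn, hu, hun, hw, hwn, hxy, hxu, hxw, hyu, hyw,
    huw, rfl⟩) | ⟨x, y, z, hx, hxn, hy, hyn, hz, hzn, hxy, hxz, hyz, rfl⟩)
  · rw [map_mul, FreeGroup.lift_apply_of, psiLetter_sq l hL]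
  · simp only [map_mul, map_inv, lift_psiLetter_fgen2 n l hL hx hy hxn hyn hxy,
      lift_psiLetter_fgen2 n l hL hu hw hun hwn huw, psiLetter_comm l hL hxu hxw hyu hyw]
    group
  · simp only [map_mul, map_inv, lift_psiLetter_fgen2 n l hL hx hy hxn hyn hxy,
      lift_psiLetter_fgen2 n l hL hx hz hxn hzn hxz, lift_psiLetter_fgen2 n l hL hy hz hyn hzn hyz,
      psiLetter_tri l hL hxy hxz hyz, mul_inv_cancel]

def psiHom : G2 (n + 1) →* (Perm ((ℕ → ZMod 2) × H))ᵐᵒᵖ :=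
  PresentedGroup.toGroup (lift_psiLetter_eq_one_of_mem_rels2 n l hL)

lemma psiHom_toG2 (hl1 : 1 ≤ l) (hl2 : l ≤ n + 1) (β : List (PIdx (n + 1))) :
    (psiHom n l hL (toG2 β)).unop (0, 1) = (fun x => (cnt2 β x l : ZMod 2),
      ((psiWord n l β).map fun a => L a.1.1.1 a.1.1.2 a.2).prod) := by
  induction β using List.reverseRecOn with
  | nil => exact Prod.ext (funext fun _ => by simp [toG2, cnt2]) (by simp [psiWord, toG2])
  | append_singleton β a ih =>
    have hsnoc : toG2 (β ++ [a]) = toG2 β * PresentedGroup.of a := by simp [toG2]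
    rw [hsnoc, map_mul, unop_mul, Perm.mul_apply, ih, psiHom, PresentedGroup.toGroup.of,
      psiLetter, unop_op, machineStep_apply, psiWord_append_singleton, List.map_append,
      List.prod_append]
    refine Prod.ext (funext fun x => ?_) ?_
    · simp only [Pi.add_apply, strandFlip_apply, cnt2_append_singleton, Nat.cast_add]
      split_ifs <;> simp_all [pairSet]
    · dsimp only
      congr 1
      by_cases hm : l = a.1.1 ∨ l = a.1.2
      · rw [if_pos hm, psiOut_of_eq l L (hm.imp Eq.symm Eq.symm)]
        rfl
      · have hx : a.1.1 ≠ l := fun h => hm (Or.inl h.symm)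
        have hy : a.1.2 ≠ l := fun h => hm (Or.inr h.symm)
        have hok : P2ok n (sort2 (del l a.1.1) (del l a.1.2)) := by
          rw [sort2_del a.2.2.1]
          exact P2ok_del hl1 hl2 a.2 hx hy
        rw [if_neg hm, pairMkS, dif_pos hok, psiOut, if_neg (not_or.mpr ⟨hx, hy⟩)]
        simp [sort2_del a.2.2.1]

end StrandDeletion

theorem statement_12_general (n l i j : ℕ) (hl1 : 1 ≤ l) (hl2 : l ≤ n + 1)
    (β β' : List (PIdx (n + 1)))
    (h : toG2 β = toG2 β') :
    wP2 i j (psiWord n l β) = wP2 i j (psiWord n l β') := by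
  have hL := parityLetter_parityRelations n i j
  have key (γ : List (PIdx (n + 1))) :
      wP2 i j (psiWord n l γ) = (((psiHom n l hL (toG2 γ)).unop (0, 1)).2.unop (0, 1)).2 := by
    rw [psiHom_toG2 n l hL hl1 hl2, parityLetter_run]
  rw [key, key, h]

theorem statement_12 (n l i j : ℕ) (hn : 3 ≤ n) (hl1 : 1 ≤ l) (hl2 : l ≤ n + 1)
    (hi : 1 ≤ i) (hij : i < j) (hj : j ≤ n)
    (β β' : List (PIdx (n + 1))) (hg : good2 β) (hg' : good2 β')
    (h : toG2 β = toG2 β') :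
    wP2 i j (psiWord n l β) = wP2 i j (psiWord n l β') :=
  statement_12_general n l i j hl1 hl2 β β' h

end GnkBrunnian
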